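/- For every t > 0 there exists s₀ > 0 such that for all s ≥ s₀, all (x₁,x₂) ∈ 𝔉, all y₁,y₂ > 0 with y₁y₂ ≥ t and y₁/y₂ ∈ [λ⁻²,λ²], all θ₁ ∈ (π/4, 3π/4) and all θ₂ ∈ [0,π), one has 𝓛h(x₁,x₂,y₁,y₂,θ₁,θ₂) ∩ 𝒯(s) ≠ ∅. -/
import Mathlib


open MeasureTheory Matrix Set Pointwise

noncomputable section

/-- The real embedding of `ℤ[√2]`, `a + b√2 ↦ a + b√2`. -/
def emb (α : Zsqrtd 2) : ℝ := (α.re : ℝ) + (α.im : ℝ) * Real.sqrt 2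

/-- The Galois-conjugate embedding `σ`, `a + b√2 ↦ a − b√2`. -/
def embc (α : Zsqrtd 2) : ℝ := (α.re : ℝ) - (α.im : ℝ) * Real.sqrt 2

/-- The fundamental unit `λ = 1 + √2`. -/
def lam : ℝ := 1 + Real.sqrt 2

/-- `𝓛'`: the Minkowski embedding of `ℤ[√2]` in `ℝ²`. -/
def Lp : Set (ℝ × ℝ) := {p | ∃ α : Zsqrtd 2, p = (emb α, embc α)}

/-- `v(β₁,β₂) = (β₁, β₂, σ(β₁), σ(β₂))`. -/
def latvec (β₁ β₂ : Zsqrtd 2) : Fin 4 → ℝ := ![emb β₁, emb β₂, embc β₁, embc β₂]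

/-- `𝓛`: the Minkowski embedding of `ℤ[√2]²` in `ℝ⁴`. -/
def Lquad : Set (Fin 4 → ℝ) := {v | ∃ β₁ β₂ : Zsqrtd 2, v = latvec β₁ β₂}

/-- `𝓛h`, for a 4×4 real matrix `h` (row vectors, right multiplication). -/
def latimage (h : Matrix (Fin 4) (Fin 4) ℝ) : Set (Fin 4 → ℝ) :=
  (fun v => Matrix.vecMul v h) '' Lquad

def nmat (x : ℝ) : Matrix (Fin 2) (Fin 2) ℝ := !![1, x; 0, 1]
def amat (y : ℝ) : Matrix (Fin 2) (Fin 2) ℝ := !![y, 0; 0, y⁻¹]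
def kmat (θ : ℝ) : Matrix (Fin 2) (Fin 2) ℝ :=
  !![Real.cos θ, -Real.sin θ; Real.sin θ, Real.cos θ]

/-- Block diagonal 4×4 matrix from two 2×2 blocks. -/
def bd (A B : Matrix (Fin 2) (Fin 2) ℝ) : Matrix (Fin 4) (Fin 4) ℝ :=
  !![A 0 0, A 0 1, 0, 0;
     A 1 0, A 1 1, 0, 0;
     0, 0, B 0 0, B 0 1;
     0, 0, B 1 0, B 1 1]

/-- `h(x₁,x₂,y₁,y₂,θ₁,θ₂) = diag(n(x₁)a(y₁)k(θ₁), n(x₂)a(y₂)k(θ₂))`. -/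
def hmat (x₁ x₂ y₁ y₂ θ₁ θ₂ : ℝ) : Matrix (Fin 4) (Fin 4) ℝ :=
  bd (nmat x₁ * amat y₁ * kmat θ₁) (nmat x₂ * amat y₂ * kmat θ₂)

/-- `H = SL₂(ℝ)² ⊂ SL₄(ℝ)` (block diagonal). -/
def Hset : Set (Matrix (Fin 4) (Fin 4) ℝ) :=
  {h | ∃ A B : Matrix (Fin 2) (Fin 2) ℝ, A.det = 1 ∧ B.det = 1 ∧ h = bd A B}

/-- `Γ_K = {diag(A, σ(A)) : A ∈ SL₂(ℤ[√2])}`. -/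
def GammaK : Set (Matrix (Fin 4) (Fin 4) ℝ) :=
  {g | ∃ A : Matrix (Fin 2) (Fin 2) (Zsqrtd 2), A.det = 1 ∧ g = bd (A.map emb) (A.map embc)}

/-- `𝒲`: the open regular octagon of side length √2. -/
def Woct : Set (ℝ × ℝ) :=
  {p | |p.1| < lam / Real.sqrt 2 ∧ |p.2| < lam / Real.sqrt 2 ∧ |p.1| + |p.2| < lam}

/-- `𝒲' = 𝒲 ∖ (√2−1)𝒲`. -/
def Wp : Set (ℝ × ℝ) := Woct \ ((Real.sqrt 2 - 1) • Woct)

/-- `θ̂ = 48√2/π⁴`, the density of visible points. -/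
def thetaHat : ℝ := 48 * Real.sqrt 2 / Real.pi ^ 4

/-- `T(s)`: open triangle with vertices `(0,0)`, `(s/θ̂)^{1/2}(1,±1)`. -/
def Tset (s : ℝ) : Set (ℝ × ℝ) :=
  {p | 0 < p.1 ∧ p.1 < Real.sqrt (s / thetaHat) ∧ |p.2| < p.1}

/-- `𝔉`: a fundamental domain of `𝓛'`. -/
def Fdom : Set (ℝ × ℝ) :=
  {p | ∃ r₁ ∈ Set.Ico (0:ℝ) 1, ∃ r₂ ∈ Set.Ico (0:ℝ) 1,
    p = (1 + r₁ + r₂ * Real.sqrt 2, 2 + r₁ - r₂ * Real.sqrt 2)}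

/-- The Siegel domain `𝔇_t`. -/
def Dset (t : ℝ) : Set (Matrix (Fin 4) (Fin 4) ℝ) :=
  {h | ∃ x₁ x₂ y₁ y₂ θ₁ θ₂ : ℝ, (x₁, x₂) ∈ Fdom ∧ 0 < y₁ ∧ 0 < y₂ ∧ t ≤ y₁ * y₂ ∧
    lam ^ (-2 : ℤ) ≤ y₁ / y₂ ∧ y₁ / y₂ ≤ lam ^ 2 ∧
    θ₁ ∈ Set.Ico 0 Real.pi ∧ θ₂ ∈ Set.Ico 0 Real.pi ∧ h = hmat x₁ x₂ y₁ y₂ θ₁ θ₂}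

/-- Row vector times 2×2 matrix, on `ℝ × ℝ`. -/
def mul2 (p : ℝ × ℝ) (M : Matrix (Fin 2) (Fin 2) ℝ) : ℝ × ℝ :=
  (p.1 * M 0 0 + p.2 * M 1 0, p.1 * M 0 1 + p.2 * M 1 1)

/-- `r(s)`: the unique integer with `λ^{2r} ≤ s^{1/4} < λ^{2(r+1)}`. -/
def rr (s : ℝ) : ℤ := ⌊Real.logb (lam ^ 2) (s ^ ((1:ℝ)/4))⌋

/-- `𝒯(s)` with explicit integer `r`: `λ^{−2r}T(s) × λ^{2r}𝒲`. -/
def calT (s : ℝ) (r : ℤ) : Set (Fin 4 → ℝ) :=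
  {v | (lam ^ (2*r) * v 0, lam ^ (2*r) * v 1) ∈ Tset s ∧
       (lam ^ (-(2*r)) * v 2, lam ^ (-(2*r)) * v 3) ∈ Woct}

/-- `𝒯(s) = λ^{−2r(s)}T(s) × λ^{2r(s)}𝒲`. -/
def calTs (s : ℝ) : Set (Fin 4 → ℝ) := calT s (rr s)

/-- Euclidean norm on `ℝ⁴`. -/
def enorm4 (v : Fin 4 → ℝ) : ℝ := Real.sqrt (∑ i, (v i) ^ 2)

/-- `𝓛h̃ = (ℤ(y₁,0,y₂,0) + ℤ√2(y₁,0,−y₂,0) + ℝ(0,1,0,0) + ℝ(0,0,0,1))·diag(k(θ₁),k(θ₂))`. -/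
def Ltilde (y₁ y₂ θ₁ θ₂ : ℝ) : Set (Fin 4 → ℝ) :=
  {v | ∃ (m n : ℤ) (c₁ c₂ : ℝ),
    v = Matrix.vecMul ![((m:ℝ) + (n:ℝ) * Real.sqrt 2) * y₁, c₁,
          ((m:ℝ) - (n:ℝ) * Real.sqrt 2) * y₂, c₂] (bd (kmat θ₁) (kmat θ₂))}

open Classical in
/-- Real-valued indicator of a proposition. -/
def ind (P : Prop) : ℝ := if P then 1 else 0

/-- `c_H = 3/π⁴`. -/
def cH : ℝ := 3 / Real.pi ^ 4

/-- `Y_t = {(y₁,y₂) : y₁,y₂ > 0, y₁y₂ ≥ t, y₁/y₂ ∈ (λ⁻²,λ²)}`. -/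
def Yt (t : ℝ) : Set (ℝ × ℝ) :=
  {y | 0 < y.1 ∧ 0 < y.2 ∧ t ≤ y.1 * y.2 ∧ lam ^ (-2:ℤ) < y.1 / y.2 ∧ y.1 / y.2 < lam ^ 2}

/-- The main term `G_M(s)` (depending on the Siegel-domain parameter `t`). -/
def GM (t s : ℝ) : ℝ :=
  cH * ∫ θ₂ in Set.Ico (0:ℝ) Real.pi, ∫ θ₁ in Set.Ico (0:ℝ) Real.pi, ∫ y in Yt t, ∫ x in Fdom,
    (y.1 ^ 3 * y.2 ^ 3)⁻¹ * ind (Ltilde y.1 y.2 θ₁ θ₂ ∩ calTs s = ∅)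

/-- The error term `G_E(s)`. -/
def GE (t s : ℝ) : ℝ :=
  cH * ∫ θ₂ in Set.Ico (0:ℝ) Real.pi, ∫ θ₁ in Set.Ico (0:ℝ) Real.pi, ∫ y in Yt t, ∫ x in Fdom,
    (y.1 ^ 3 * y.2 ^ 3)⁻¹ *
      ind (latimage (hmat x.1 x.2 y.1 y.2 θ₁ θ₂) ∩ calTs s = ∅ ∧
           (Ltilde y.1 y.2 θ₁ θ₂ ∩ calTs s).Nonempty)

/-- `J = [0,π/4] ∪ [3π/4,π)`. -/
def Jset : Set ℝ := Set.Icc 0 (Real.pi/4) ∪ Set.Ico (3*Real.pi/4) Real.pi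

/-- `Y = {(y₁,y₂) : y₁ > 0, 1 < y₂ < λ²}`. -/
def Yset : Set (ℝ × ℝ) := {y | 0 < y.1 ∧ 1 < y.2 ∧ y.2 < lam ^ 2}

/-- `T₁`: open triangle with vertices `(0,0)`, `(1,±1)`. -/
def T1 : Set (ℝ × ℝ) := {p | 0 < p.1 ∧ p.1 < 1 ∧ |p.2| < p.1}

/-- `ℓ₁(θ₁)`: first-coordinate projection of `θ̂^{−1/2}T₁k(−θ₁)`. -/
def ell1 (θ₁ : ℝ) : Set ℝ :=
  {x | ∃ p ∈ T1, x = (mul2 ((Real.sqrt thetaHat)⁻¹ • p) (kmat (-θ₁))).1}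

/-- `ℓ₂(θ₂)`: first-coordinate projection of `𝒲k(−θ₂)`. -/
def ell2 (θ₂ : ℝ) : Set ℝ := {x | ∃ p ∈ Woct, x = (mul2 p (kmat (-θ₂))).1}

/-- `C_𝒫 = 2304(2−√2)/π⁸`. -/
def CP : ℝ := 2304 * (2 - Real.sqrt 2) / Real.pi ^ 8

/-- `ζ_K(2) = π⁴/(48√2)`. -/
def zetaK2 : ℝ := Real.pi ^ 4 / (48 * Real.sqrt 2)

/-- `𝒯'(s) = T(s) × 𝒲`. -/
def Tprime (s : ℝ) : Set (Fin 4 → ℝ) :=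
  {v | (v 0, v 1) ∈ Tset s ∧ (v 2, v 3) ∈ Woct}

/-- `L₁(θ₁)` from Lemma 3.4: projection of `λ^{−2r}T(s)k(−θ₁)` onto the x-axis. -/
def L1set (s : ℝ) (r : ℤ) (θ₁ : ℝ) : Set ℝ :=
  {x | ∃ p ∈ Tset s, x = (mul2 ((lam ^ (-(2*r)) : ℝ) • p) (kmat (-θ₁))).1}

/-- `L₂(θ₂)`: projection of `λ^{2r}𝒲k(−θ₂)` onto the x-axis. -/
def L2set (r : ℤ) (θ₂ : ℝ) : Set ℝ :=
  {x | ∃ p ∈ Woct, x = (mul2 ((lam ^ (2*r) : ℝ) • p) (kmat (-θ₂))).1}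

/-- `n(x)a(y)k(θ)` where `y,θ` are determined by `y⁻¹(sin θ, cos θ) = z`. -/
def hz (z : ℝ × ℝ) (x : ℝ) : Matrix (Fin 2) (Fin 2) ℝ :=
  nmat x * amat (Real.sqrt (z.1 ^ 2 + z.2 ^ 2))⁻¹ *
    !![(Real.sqrt (z.1 ^ 2 + z.2 ^ 2))⁻¹ * z.2, -((Real.sqrt (z.1 ^ 2 + z.2 ^ 2))⁻¹ * z.1);
       (Real.sqrt (z.1 ^ 2 + z.2 ^ 2))⁻¹ * z.1, (Real.sqrt (z.1 ^ 2 + z.2 ^ 2))⁻¹ * z.2]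

/-- The function `F₂` of Lemma 4.7. -/
def F2 (z₁ : ℝ) : ℝ :=
  (24 / Real.pi ^ 4) * ∫ z₂ in Set.Ioo (-z₁) z₁, ∫ w in Wp, ∫ x in Fdom,
    ind (latimage (bd (hz (z₁, z₂) x.1) (hz w x.2)) ∩ Tprime (z₁ ^ 2 * thetaHat) = ∅)

/-- The box `B(α₃,α₄)`. -/
def Bbox (α₃ α₄ : Zsqrtd 2) (C₁ s : ℝ) : Set (ℝ × ℝ) :=
  {x | |x.1 + emb α₄ / emb α₃| ≤ C₁ / Real.sqrt s ∧
       |x.2 + embc α₄ / embc α₃| ≤ C₁ / Real.sqrt s}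

/-- The matrix `h` determined by `s, z₂, w, x₁, x₂` via
`y₁⁻¹(sin θ₁, cos θ₁) = λ^{−2r}(θ̂^{−1/2}s^{1/2}, z₂)`, `y₂⁻¹(sin θ₂, cos θ₂) = λ^{2r}w`. -/
def hfull (s z₂ : ℝ) (w : ℝ × ℝ) (x₁ x₂ : ℝ) : Matrix (Fin 4) (Fin 4) ℝ :=
  bd (hz ((lam ^ (-(2 * rr s)) : ℝ) • (Real.sqrt (s / thetaHat), z₂)) x₁)
     (hz ((lam ^ (2 * rr s) : ℝ) • w) x₂)

/-- `F⁺_{(α₃,α₄)}(s)`. -/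
def Fplus (α₃ α₄ : Zsqrtd 2) (C₁ s : ℝ) : ℝ :=
  (Real.sqrt s)⁻¹ * ∫ z₂ in Set.Ioo (0:ℝ) (Real.sqrt (s / thetaHat)), ∫ w in Wp,
    ∫ x in Bbox α₃ α₄ C₁ s, ind (latimage (hfull s z₂ w x.1 x.2) ∩ calTs s = ∅)

/-- `F⁻_{(α₃,α₄)}(s)`. -/
def Fminus (α₃ α₄ : Zsqrtd 2) (C₁ s : ℝ) : ℝ :=
  (Real.sqrt s)⁻¹ * ∫ z₂ in Set.Ioo (-Real.sqrt (s / thetaHat)) (0:ℝ), ∫ w in Wp,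
    ∫ x in Bbox α₃ α₄ C₁ s, ind (latimage (hfull s z₂ w x.1 x.2) ∩ calTs s = ∅)

/-- `F_{(α₃,α₄)}(s)`. -/
def Ffull (α₃ α₄ : Zsqrtd 2) (C₁ s : ℝ) : ℝ :=
  (Real.sqrt s)⁻¹ *
    ∫ z₂ in Set.Ioo (-Real.sqrt (s / thetaHat)) (Real.sqrt (s / thetaHat)), ∫ w in Wp,
      ∫ x in Bbox α₃ α₄ C₁ s, ind (latimage (hfull s z₂ w x.1 x.2) ∩ calTs s = ∅)

/-- `v₁ = (α₃, α₄, σ(α₃), σ(α₄))`. -/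
def vv1 (α₃ α₄ : Zsqrtd 2) : Fin 4 → ℝ := ![emb α₃, emb α₄, embc α₃, embc α₄]

/-- `v₂ = (√2α₃, √2α₄, −√2σ(α₃), −√2σ(α₄))`. -/
def vv2 (α₃ α₄ : Zsqrtd 2) : Fin 4 → ℝ :=
  ![Real.sqrt 2 * emb α₃, Real.sqrt 2 * emb α₄,
    -(Real.sqrt 2 * embc α₃), -(Real.sqrt 2 * embc α₄)]

/-- `b₁ = (α₃, α₄, 0, 0)`. -/
def bb1 (α₃ α₄ : Zsqrtd 2) : Fin 4 → ℝ := ![emb α₃, emb α₄, 0, 0]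

/-- `b₂ = (0, 0, σ(α₃), σ(α₄))`. -/
def bb2 (α₃ α₄ : Zsqrtd 2) : Fin 4 → ℝ := ![0, 0, embc α₃, embc α₄]

/-- The subgrid `𝓛_v = v + ℤv₁ + ℤv₂`. -/
def Lv (α₃ α₄ : Zsqrtd 2) (v : Fin 4 → ℝ) : Set (Fin 4 → ℝ) :=
  {u | ∃ m n : ℤ, u = v + (m:ℝ) • vv1 α₃ α₄ + (n:ℝ) • vv2 α₃ α₄}

/-- The filled plane `Π_v = v + ℝb₁ + ℝb₂`. -/
def Piv (α₃ α₄ : Zsqrtd 2) (v : Fin 4 → ℝ) : Set (Fin 4 → ℝ) :=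
  {u | ∃ c₁ c₂ : ℝ, u = v + c₁ • bb1 α₃ α₄ + c₂ • bb2 α₃ α₄}

/-- `d(s) = θ̂^{−1/2}λ^{−2r}s^{1/2}`. -/
def ds (s : ℝ) : ℝ := lam ^ (-(2 * rr s)) * Real.sqrt (s / thetaHat)

/-- The explicit integral representation `Φ(s)` of the limiting gap distribution `F(s)`. -/
def Phi (s : ℝ) : ℝ :=
  (1 / ((2:ℝ) ^ ((11:ℝ)/2) * Real.sqrt thetaHat * zetaK2 * Real.sqrt s)) *
    ∫ z₂ in Set.Ioo (-Real.sqrt (s / thetaHat)) (Real.sqrt (s / thetaHat)), ∫ w in Wp,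
      ∫ x in Fdom, ind (latimage (hfull s z₂ w x.1 x.2) ∩ calTs s = ∅)



/-- Auxiliary lemmas for STATEMENT 5. -/
lemma sqrt2_sq' : Real.sqrt 2 ^ 2 = 2 := Real.sq_sqrt (by norm_num)
lemma sqrt2_pos' : (0:ℝ) < Real.sqrt 2 := Real.sqrt_pos.2 (by norm_num)
lemma sqrt2_gt1' : (1:ℝ) < Real.sqrt 2 := by nlinarith [sqrt2_sq', sqrt2_pos']

lemma lam_pos : (0:ℝ) < lam := by unfold lam; positivity
lemma lam_gt1 : (1:ℝ) < lam := by unfold lam; linarith [sqrt2_pos']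
lemma lam_ne1 : lam ≠ 1 := ne_of_gt lam_gt1

lemma emb_mul' (a b : Zsqrtd 2) : emb (a*b) = emb a * emb b := by
  simp only [emb, Zsqrtd.re_mul, Zsqrtd.im_mul]
  push_cast
  linear_combination (-(a.im * b.im) : ℝ) * sqrt2_sq'

lemma embc_mul' (a b : Zsqrtd 2) : embc (a*b) = embc a * embc b := by
  simp only [embc, Zsqrtd.re_mul, Zsqrtd.im_mul]
  push_cast
  linear_combination (-(a.im * b.im) : ℝ) * sqrt2_sq'

lemma emb_pow' (a : Zsqrtd 2) (n : ℕ) : emb (a^n) = emb a ^ n := by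
  induction n with
  | zero => simp [emb]
  | succ n ih => rw [pow_succ, pow_succ, emb_mul', ih]

lemma embc_pow' (a : Zsqrtd 2) (n : ℕ) : embc (a^n) = embc a ^ n := by
  induction n with
  | zero => simp [embc]
  | succ n ih => rw [pow_succ, pow_succ, embc_mul', ih]

/-- `λ^k` as an element of `ℤ[√2]`, for `k : ℤ`. -/
def lbeta (k : ℤ) : Zsqrtd 2 :=
  if 0 ≤ k then (⟨1,1⟩ : Zsqrtd 2) ^ k.toNat else (⟨-1,1⟩ : Zsqrtd 2) ^ (-k).toNat

lemma lam_inv' : lam⁻¹ = Real.sqrt 2 - 1 := by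
  have h : lam * (Real.sqrt 2 - 1) = 1 := by unfold lam; nlinarith [sqrt2_sq']
  field_simp [ne_of_gt lam_pos] at h ⊢
  linarith

lemma emb_lbeta (k : ℤ) : emb (lbeta k) = lam ^ k := by
  unfold lbeta
  split_ifs with h
  · rw [emb_pow', show emb ⟨1,1⟩ = lam by simp [emb, lam]]
    rw [← zpow_natCast, Int.toNat_of_nonneg h]
  · rw [emb_pow', show emb ⟨-1,1⟩ = lam⁻¹ by
      rw [lam_inv']; show ((-1:ℤ):ℝ) + ((1:ℤ):ℝ) * Real.sqrt 2 = _; push_cast; ring]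
    rw [← zpow_natCast, _root_.inv_zpow, ← _root_.zpow_neg, Int.toNat_of_nonneg (by omega : (0:ℤ) ≤ -k)]
    simp

lemma abs_embc_lbeta (k : ℤ) : |embc (lbeta k)| = lam ^ (-k) := by
  unfold lbeta
  split_ifs with h
  · rw [embc_pow', show embc ⟨1,1⟩ = -lam⁻¹ by
      rw [lam_inv']; show ((1:ℤ):ℝ) - ((1:ℤ):ℝ) * Real.sqrt 2 = _; push_cast; ring]
    rw [abs_pow, abs_neg, abs_of_pos (inv_pos.2 lam_pos), ← zpow_natCast, _root_.inv_zpow,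
      ← _root_.zpow_neg, Int.toNat_of_nonneg h]
  · rw [embc_pow', show embc ⟨-1,1⟩ = -lam by
      unfold lam; show ((-1:ℤ):ℝ) - ((1:ℤ):ℝ) * Real.sqrt 2 = _; push_cast; ring]
    rw [abs_pow, abs_neg, abs_of_pos lam_pos, ← zpow_natCast,
      Int.toNat_of_nonneg (by omega : (0:ℤ) ≤ -k)]

lemma vecMul_hmat' (v w x₁ x₂ y₁ y₂ θ₁ θ₂ : ℝ) :
    Matrix.vecMul ![0, v, 0, w] (hmat x₁ x₂ y₁ y₂ θ₁ θ₂) =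
    ![v * (Real.sin θ₁ / y₁), v * (Real.cos θ₁ / y₁),
      w * (Real.sin θ₂ / y₂), w * (Real.cos θ₂ / y₂)] := by
  funext i
  fin_cases i <;>
    simp [hmat, bd, nmat, amat, kmat, Matrix.vecMul, dotProduct,
      Fin.sum_univ_four, Matrix.mul_apply, Fin.sum_univ_two, div_eq_mul_inv,
      Matrix.vecHead, Matrix.vecTail] <;> left <;> ring

lemma sin_gt' (θ : ℝ) (h : θ ∈ Set.Ioo (Real.pi/4) (3*Real.pi/4)) :
    Real.sqrt 2 / 2 < Real.sin θ := by
  obtain ⟨h1, h2⟩ := h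
  have hpi := Real.pi_pos
  rcases le_or_gt θ (Real.pi/2) with hle | hlt
  · calc Real.sqrt 2 / 2 = Real.sin (Real.pi/4) := (Real.sin_pi_div_four).symm
    _ < Real.sin θ := by
        apply Real.strictMonoOn_sin ⟨by linarith, by linarith⟩ ⟨by linarith, hle⟩ h1
  · rw [← Real.sin_pi_sub]
    calc Real.sqrt 2 / 2 = Real.sin (Real.pi/4) := (Real.sin_pi_div_four).symm
    _ < Real.sin (Real.pi - θ) := by
        apply Real.strictMonoOn_sin ⟨by linarith, by linarith⟩ ⟨by linarith, by linarith⟩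
        linarith

lemma abs_cos_lt' (θ : ℝ) (h : θ ∈ Set.Ioo (Real.pi/4) (3*Real.pi/4)) :
    |Real.cos θ| < Real.sqrt 2 / 2 := by
  obtain ⟨h1, h2⟩ := h
  have hpi := Real.pi_pos
  have key : ∀ u : ℝ, 0 ≤ u → u < Real.pi/4 → Real.sin u < Real.sqrt 2 / 2 := by
    intro u hu0 hu
    calc Real.sin u < Real.sin (Real.pi/4) := by
          apply Real.strictMonoOn_sin ⟨by linarith, by linarith⟩ ⟨by linarith, by linarith⟩ hu
    _ = Real.sqrt 2 / 2 := Real.sin_pi_div_four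
  have hc : Real.cos θ = Real.sin (Real.pi/2 - θ) := (Real.sin_pi_div_two_sub θ).symm
  rw [hc]
  rcases le_or_gt θ (Real.pi/2) with hle | hlt
  · rw [abs_of_nonneg (Real.sin_nonneg_of_nonneg_of_le_pi (by linarith) (by linarith))]
    exact key _ (by linarith) (by linarith)
  · rw [show Real.sin (Real.pi/2 - θ) = -Real.sin (θ - Real.pi/2) by
      rw [← Real.sin_neg]; ring_nf]
    rw [abs_neg, abs_of_nonneg (Real.sin_nonneg_of_nonneg_of_le_pi (by linarith) (by linarith))]
    exact key _ (by linarith) (by linarith)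

lemma abs_sin_add_abs_cos_le' (θ : ℝ) :
    |Real.sin θ| + |Real.cos θ| ≤ Real.sqrt 2 := by
  have h := Real.sin_sq_add_cos_sq θ
  nlinarith [abs_nonneg (Real.sin θ), abs_nonneg (Real.cos θ), sqrt2_sq',
    Real.sqrt_nonneg 2, sq_abs (Real.sin θ), sq_abs (Real.cos θ),
    sq_nonneg (|Real.sin θ| - |Real.cos θ|),
    sq_nonneg (|Real.sin θ| + |Real.cos θ| - Real.sqrt 2)]


theorem stmt5 : ∀ t > (0:ℝ), ∃ s₀ > (0:ℝ), ∀ s ≥ s₀, ∀ r : ℤ,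
    lam ^ (2*r) ≤ s ^ ((1:ℝ)/4) → s ^ ((1:ℝ)/4) < lam ^ (2*r+2) →
    ∀ x₁ x₂ y₁ y₂ θ₁ θ₂ : ℝ, (x₁, x₂) ∈ Fdom → 0 < y₁ → 0 < y₂ → t ≤ y₁ * y₂ →
    lam ^ (-2:ℤ) ≤ y₁ / y₂ → y₁ / y₂ ≤ lam ^ 2 →
    θ₁ ∈ Set.Ioo (Real.pi/4) (3*Real.pi/4) → θ₂ ∈ Set.Ico 0 Real.pi →
    (latimage (hmat x₁ x₂ y₁ y₂ θ₁ θ₂) ∩ calT s r).Nonempty := by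
  intro t ht
  have hth : 0 < thetaHat := by
    unfold thetaHat
    positivity
  refine ⟨thetaHat * (2 / t ^ 2) + 1, by positivity, ?_⟩
  intro s hs r _ _ x₁ x₂ y₁ y₂ θ₁ θ₂ _ hy₁ hy₂ hyt hq1 hq2 hθ₁ hθ₂
  have hpi := Real.pi_pos
  -- basic bound: √2 < t √(s/θ̂)
  have hsθ : Real.sqrt 2 < t * Real.sqrt (s / thetaHat) := by
    have h0 : 2 / t ^ 2 < s / thetaHat := by
      rw [div_lt_div_iff₀ (by positivity) hth]
      have h00 : thetaHat * (2 / t ^ 2) < s := by linarith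
      have h01 : thetaHat * (2 / t ^ 2) * t ^ 2 = 2 * thetaHat := by field_simp
      nlinarith [mul_lt_mul_of_pos_right h00 (by positivity : (0:ℝ) < t ^ 2)]
    have h1 : Real.sqrt 2 / t < Real.sqrt (s / thetaHat) := by
      have h2 := Real.sqrt_lt_sqrt (by positivity) h0
      rwa [Real.sqrt_div (by norm_num), Real.sqrt_sq ht.le] at h2
    calc Real.sqrt 2 = t * (Real.sqrt 2 / t) := by field_simp
    _ < t * Real.sqrt (s / thetaHat) := by exact mul_lt_mul_of_pos_left h1 ht
  set a : ℝ := Real.sqrt 2 / (lam * y₂) with ha_def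
  set b : ℝ := y₁ * Real.sqrt (s / thetaHat) with hb_def
  have ha : 0 < a := div_pos sqrt2_pos' (mul_pos lam_pos hy₂)
  have hab : lam * a < b := by
    have h3 : lam * a = Real.sqrt 2 / y₂ := by
      rw [ha_def]; field_simp [ne_of_gt lam_pos, ne_of_gt hy₂]
    rw [h3, hb_def, div_lt_iff₀ hy₂]
    have h4 : t * Real.sqrt (s / thetaHat) ≤ y₁ * y₂ * Real.sqrt (s / thetaHat) :=
      mul_le_mul_of_nonneg_right hyt (Real.sqrt_nonneg _)
    nlinarith
  set m : ℤ := ⌊Real.logb lam a⌋ + 1 with hm_def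
  have hm1 : a < lam ^ m := by
    calc a = lam ^ Real.logb lam a := (Real.rpow_logb lam_pos lam_ne1 ha).symm
    _ < lam ^ ((m : ℤ) : ℝ) := by
        apply (Real.rpow_lt_rpow_left_iff lam_gt1).2
        have := Int.lt_floor_add_one (Real.logb lam a)
        push_cast [hm_def]; push_cast at this; linarith
    _ = lam ^ m := Real.rpow_intCast lam m
  have hm2 : lam ^ m < b := by
    have h5 : lam ^ m ≤ lam * a := by
      calc lam ^ m = lam ^ ((m:ℤ):ℝ) := (Real.rpow_intCast lam m).symm
      _ ≤ lam ^ (Real.logb lam a + 1) := by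
          apply (Real.rpow_le_rpow_left_iff lam_gt1).2
          have := Int.floor_le (Real.logb lam a)
          push_cast [hm_def]; linarith
      _ = lam * a := by
          rw [Real.rpow_add lam_pos, Real.rpow_logb lam_pos lam_ne1 ha, Real.rpow_one]; ring
    linarith
  set k : ℤ := m - 2 * r with hk_def
  -- the lattice point
  refine ⟨Matrix.vecMul (latvec 0 (lbeta k)) (hmat x₁ x₂ y₁ y₂ θ₁ θ₂),
    ⟨latvec 0 (lbeta k), ⟨0, lbeta k, rfl⟩, rfl⟩, ?_⟩
  have hlv : latvec 0 (lbeta k) = ![(0:ℝ), emb (lbeta k), 0, embc (lbeta k)] := by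
    funext i; fin_cases i <;> simp [latvec, emb, embc]
  rw [hlv, vecMul_hmat']
  -- power bookkeeping
  have hlam_ne : lam ≠ 0 := ne_of_gt lam_pos
  have hpow : lam ^ (2*r) * lam ^ k = lam ^ m := by
    rw [← zpow_add₀ hlam_ne]; congr 1; omega
  have hpow2 : lam ^ (-(2*r)) * lam ^ (-k) = lam ^ (-m) := by
    rw [← zpow_add₀ hlam_ne]; congr 1; omega
  have hM : (0:ℝ) < lam ^ m := zpow_pos lam_pos m
  have hM2r : (0:ℝ) < lam ^ (2*r) := zpow_pos lam_pos _
  have hMneg : (0:ℝ) < lam ^ (-(2*r)) := zpow_pos lam_pos _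
  have hMnm : (0:ℝ) < lam ^ (-m) := zpow_pos lam_pos _
  have hs1 : Real.sqrt 2 / 2 < Real.sin θ₁ := sin_gt' θ₁ hθ₁
  have hs1pos : 0 < Real.sin θ₁ := lt_trans (by positivity) hs1
  have hc1 : |Real.cos θ₁| < Real.sqrt 2 / 2 := abs_cos_lt' θ₁ hθ₁
  -- key bound for the octagon part
  have hkey : Real.sqrt 2 < lam ^ m * (lam * y₂) := by
    rw [ha_def] at hm1
    rw [div_lt_iff₀ (mul_pos lam_pos hy₂)] at hm1
    linarith
  have hcb : lam ^ (-m) / y₂ < lam / Real.sqrt 2 := by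
    rw [_root_.zpow_neg, div_lt_div_iff₀ hy₂ sqrt2_pos']
    have h6 : (lam ^ m)⁻¹ * (lam ^ m * (lam * y₂)) = lam * y₂ := by
      field_simp
    have h7 := mul_lt_mul_of_pos_left hkey (inv_pos.2 hM)
    linarith
  -- absolute value computation for the octagon coordinates
  have habs : ∀ u : ℝ, |lam ^ (-(2*r)) * (embc (lbeta k) * (u / y₂))|
      = lam ^ (-m) * |u| / y₂ := by
    intro u
    rw [abs_mul, abs_mul, abs_div, abs_embc_lbeta, abs_of_pos hMneg, abs_of_pos hy₂,
      show lam ^ (-(2*r)) * (lam ^ (-k) * (|u| / y₂))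
        = (lam ^ (-(2*r)) * lam ^ (-k)) * |u| / y₂ by ring, hpow2]
  have hsin2 : |Real.sin θ₂| ≤ 1 := abs_le.mpr ⟨Real.neg_one_le_sin θ₂, Real.sin_le_one θ₂⟩
  have hcos2 : |Real.cos θ₂| ≤ 1 := abs_le.mpr ⟨Real.neg_one_le_cos θ₂, Real.cos_le_one θ₂⟩
  have hsc2 : |Real.sin θ₂| + |Real.cos θ₂| ≤ Real.sqrt 2 := abs_sin_add_abs_cos_le' θ₂
  constructor
  · -- the triangle part
    simp only [Tset, Set.mem_setOf_eq, Matrix.cons_val_zero, Matrix.cons_val_one,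
      Matrix.head_cons, emb_lbeta]
    have e1 : lam ^ (2*r) * (lam ^ k * (Real.sin θ₁ / y₁))
        = lam ^ m * Real.sin θ₁ / y₁ := by rw [← hpow]; ring
    have e2 : lam ^ (2*r) * (lam ^ k * (Real.cos θ₁ / y₁))
        = lam ^ m * Real.cos θ₁ / y₁ := by rw [← hpow]; ring
    rw [e1, e2]
    refine ⟨by positivity, ?_, ?_⟩
    · rw [div_lt_iff₀ hy₁]
      have h7 : Real.sin θ₁ ≤ 1 := Real.sin_le_one θ₁
      rw [hb_def] at hm2
      linarith [mul_le_mul_of_nonneg_left h7 hM.le]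
    · rw [abs_div, abs_mul, abs_of_pos hM, abs_of_pos hy₁, div_lt_div_iff₀ hy₁ hy₁]
      exact mul_lt_mul_of_pos_right (mul_lt_mul_of_pos_left (lt_trans hc1 hs1) hM) hy₁
  · -- the octagon part
    simp only [Woct, Set.mem_setOf_eq, Matrix.cons_val_zero, Matrix.cons_val_one,
      Matrix.head_cons]
    have c2 : (![emb (lbeta k) * (Real.sin θ₁ / y₁), emb (lbeta k) * (Real.cos θ₁ / y₁),
        embc (lbeta k) * (Real.sin θ₂ / y₂), embc (lbeta k) * (Real.cos θ₂ / y₂)] : Fin 4 → ℝ) 2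
        = embc (lbeta k) * (Real.sin θ₂ / y₂) := rfl
    have c3 : (![emb (lbeta k) * (Real.sin θ₁ / y₁), emb (lbeta k) * (Real.cos θ₁ / y₁),
        embc (lbeta k) * (Real.sin θ₂ / y₂), embc (lbeta k) * (Real.cos θ₂ / y₂)] : Fin 4 → ℝ) 3
        = embc (lbeta k) * (Real.cos θ₂ / y₂) := rfl
    rw [c2, c3]
    have hb1 := habs (Real.sin θ₂)
    have hb2 := habs (Real.cos θ₂)
    have hnn : 0 ≤ lam ^ (-m) / y₂ := le_of_lt (by positivity)
    have goal1 : lam ^ (-m) * |Real.sin θ₂| / y₂ < lam / Real.sqrt 2 := by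
      calc lam ^ (-m) * |Real.sin θ₂| / y₂ ≤ lam ^ (-m) * 1 / y₂ := by gcongr
      _ = lam ^ (-m) / y₂ := by ring
      _ < lam / Real.sqrt 2 := hcb
    have goal2 : lam ^ (-m) * |Real.cos θ₂| / y₂ < lam / Real.sqrt 2 := by
      calc lam ^ (-m) * |Real.cos θ₂| / y₂ ≤ lam ^ (-m) * 1 / y₂ := by gcongr
      _ = lam ^ (-m) / y₂ := by ring
      _ < lam / Real.sqrt 2 := hcb
    refine ⟨by rw [hb1]; exact goal1, by rw [hb2]; exact goal2, ?_⟩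
    rw [hb1, hb2]
    have hsum : lam ^ (-m) * |Real.sin θ₂| / y₂ + lam ^ (-m) * |Real.cos θ₂| / y₂
        = (lam ^ (-m) / y₂) * (|Real.sin θ₂| + |Real.cos θ₂|) := by ring
    rw [hsum]
    calc (lam ^ (-m) / y₂) * (|Real.sin θ₂| + |Real.cos θ₂|)
        ≤ (lam ^ (-m) / y₂) * Real.sqrt 2 := mul_le_mul_of_nonneg_left hsc2 hnn
    _ < (lam / Real.sqrt 2) * Real.sqrt 2 := mul_lt_mul_of_pos_right hcb sqrt2_pos'
    _ = lam := by field_simp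


end
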